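/- arXiv:2305.19644 — 5 statements merged into one kernel-verified Lean document; each statement's English description precedes it below -/
import Mathlib

section
/- Let $C > \beta > 0$, let $M_0, N \ge 0$, let $t_0 \le t_1$, and let $V : \mathbb{R} \to \mathbb{R}$ be differentiable on $[t_0, t_1]$ with $V'(t) \le -C\,V(t) + M_0 e^{-\beta t} + N$ for all $t \in [t_0, t_1]$. If moreover $V(t_0) \ge \frac{M_0 e^{-\beta t_0}}{C - \beta} + \frac{N}{C}$, then for all $t \in [t_0, t_1]$: $V(t) \le \left[V(t_0) - \frac{N}{C}\right]e^{-\beta(t - t_0)} + \frac{N}{C}$. -/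
/-!
The bound `W t = (V t₀ - N / C) * exp (-β * (t - t₀)) + N / C` is a supersolution of the
differential inequality: `W' - (-C * W + M₀ * exp (-β * t) + N)` equals
`exp (-β * (t - t₀)) * ((C - β) * (V t₀ - N / C) - M₀ * exp (-β * t₀))`, which is nonnegative
precisely by the hypothesis on `V t₀`. Hence `V - W` vanishes at `t₀` and satisfies
`(V - W)' ≤ -C * (V - W)`, so Grönwall's inequality gives `V ≤ W`.
-/

open Real Set

theorem le_of_hasDerivWithinAt_of_deriv_sub_le_mul {u w u' w' : ℝ → ℝ} {K a b : ℝ}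
    (hu : ∀ t ∈ Icc a b, HasDerivWithinAt u (u' t) (Icc a b) t)
    (hw : ∀ t ∈ Icc a b, HasDerivWithinAt w (w' t) (Icc a b) t) (ha : u a ≤ w a)
    (bound : ∀ t ∈ Ico a b, u' t - w' t ≤ K * (u t - w t)) :
    ∀ t ∈ Icc a b, u t ≤ w t := by
  have hdiff : ∀ t ∈ Icc a b, HasDerivWithinAt (u - w) (u' t - w' t) (Icc a b) t :=
    fun t ht => (hu t ht).sub (hw t ht)
  intro t ht
  have hle : (u - w) t ≤ gronwallBound 0 K 0 (t - a) :=
    le_gronwallBound_of_liminf_deriv_right_le (fun x hx => (hdiff x hx).continuousWithinAt)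
      (fun x hx _ hr => ((hdiff x (Ico_subset_Icc_self hx)).mono_of_mem_nhdsWithin
        (Icc_mem_nhdsGE_of_mem hx)).liminf_right_slope_le hr)
      (sub_nonpos.mpr ha) (by simpa using bound) t ht
  rw [gronwallBound_ε0_δ0, Pi.sub_apply, sub_nonpos] at hle
  exact hle

theorem hasDerivAt_mul_exp_sub_add (A β t₀ c t : ℝ) :
    HasDerivAt (fun s => A * exp (-β * (s - t₀)) + c) (-β * (A * exp (-β * (t - t₀)))) t := by
  have hexp := (((hasDerivAt_id' t).sub_const t₀).const_mul (-β)).exp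
  exact ((hexp.const_mul A).add_const c).congr_deriv (by ring)

theorem neg_mul_mul_exp_sub_add_le {C β M₀ N t₀ A : ℝ} (hC : C ≠ 0)
    (hA : M₀ * exp (-β * t₀) ≤ (C - β) * A) (t : ℝ) :
    -C * (A * exp (-β * (t - t₀)) + N / C) + M₀ * exp (-β * t) + N
      ≤ -β * (A * exp (-β * (t - t₀))) := by
  have hsplit : exp (-β * t) = exp (-β * (t - t₀)) * exp (-β * t₀) := by
    rw [← exp_add]; ring_nf
  have hgap : exp (-β * (t - t₀)) * (M₀ * exp (-β * t₀) - (C - β) * A) ≤ 0 :=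
    mul_nonpos_of_nonneg_of_nonpos (exp_pos _).le (sub_nonpos.mpr hA)
  have hNC : C * (N / C) = N := mul_div_cancel₀ N hC
  rw [hsplit]
  linear_combination hgap - hNC

theorem lyapunov_bound_fast_decay_general (C β M0 N t0 t1 : ℝ) (hβ : 0 < β) (hC : β < C)
    (V V' : ℝ → ℝ)
    (hderiv : ∀ t ∈ Set.Icc t0 t1, HasDerivWithinAt V (V' t) (Set.Icc t0 t1) t)
    (hineq : ∀ t ∈ Set.Icc t0 t1, V' t ≤ -C * V t + M0 * Real.exp (-β * t) + N)
    (hV0 : V t0 ≥ M0 * Real.exp (-β * t0) / (C - β) + N / C) :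
    ∀ t ∈ Set.Icc t0 t1,
      V t ≤ (V t0 - N / C) * Real.exp (-β * (t - t0)) + N / C := by
  set A := V t0 - N / C
  have hA : M0 * exp (-β * t0) ≤ (C - β) * A := by
    rw [← div_le_iff₀' (sub_pos.mpr hC)]
    linarith
  refine le_of_hasDerivWithinAt_of_deriv_sub_le_mul (K := -C) hderiv
    (fun t _ => (hasDerivAt_mul_exp_sub_add A β t0 (N / C) t).hasDerivWithinAt)
    (by simp [A]) fun t ht => ?_
  have hsub := hineq t (Ico_subset_Icc_self ht)
  have hsuper := neg_mul_mul_exp_sub_add_le (N := N) (hβ.trans hC).ne' hA t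
  linarith

/-- Equation (24) (Condition 1, `C - β > 0`): on a turn-on inter-event interval the
Lyapunov function lies beneath an exponentially converging function with rate `β`
and residual value `N / C`. -/
theorem lyapunov_bound_fast_decay (C β M0 N t0 t1 : ℝ) (hβ : 0 < β) (hC : β < C)
    (hM0 : 0 ≤ M0) (hN : 0 ≤ N) (ht : t0 ≤ t1) (V V' : ℝ → ℝ)
    (hderiv : ∀ t ∈ Set.Icc t0 t1, HasDerivWithinAt V (V' t) (Set.Icc t0 t1) t)
    (hineq : ∀ t ∈ Set.Icc t0 t1, V' t ≤ -C * V t + M0 * Real.exp (-β * t) + N)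
    (hV0 : V t0 ≥ M0 * Real.exp (-β * t0) / (C - β) + N / C) :
    ∀ t ∈ Set.Icc t0 t1,
      V t ≤ (V t0 - N / C) * Real.exp (-β * (t - t0)) + N / C :=
  lyapunov_bound_fast_decay_general C β M0 N t0 t1 hβ hC V V' hderiv hineq hV0
end

section
/- Let $0 < C < \beta$, let $M_0, N \ge 0$, let $T \ge 0$, and let $V : \mathbb{R} \to \mathbb{R}$ be differentiable on $[t_0, t_0 + T]$ with $V'(t) \le -C\,V(t) + M_0 e^{-\beta t} + N$ for all $t \in [t_0, t_0 + T]$. Then for all $t \in [t_0, t_0 + T]$: $V(t) \le \left[V(t_0) + M_0 e^{-\beta t_0}\,T - \frac{N}{C}\right]e^{-C(t - t_0)} + \frac{N}{C}$. -/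
/-!
Integrating factor: `t ↦ e^{C(t - t₀)} V t` grows no faster than the forcing term weighted
by `e^{C(t - t₀)}`. Since `C ≤ β`, that weight turns `M₀ e^{-β t}` into something at most
`M₀ e^{-β t₀}`, whose integral over `[t₀, t]` is at most `M₀ e^{-β t₀} T`, while the
constant `N` integrates to `(N / C) (e^{C(t - t₀)} - 1)`.
-/

open Real Set

theorem exp_neg_mul_mul_exp_mul (c x : ℝ) : exp (-c * x) * exp (c * x) = 1 := by
  rw [← exp_add, neg_mul, neg_add_cancel, exp_zero]

theorem hasDerivAt_exp_mul_sub (c a t : ℝ) :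
    HasDerivAt (fun s => exp (c * (s - a))) (exp (c * (t - a)) * c) t := by
  simpa using (((hasDerivAt_id t).sub_const a).const_mul c).exp

section IntegratingFactor

variable {V V' G g : ℝ → ℝ} {C a b : ℝ}

theorem antitoneOn_exp_mul_sub_of_deriv_le
    (hV : ∀ t ∈ Icc a b, HasDerivWithinAt V (V' t) (Icc a b) t)
    (hG : ∀ t ∈ Icc a b, HasDerivWithinAt G (g t) (Icc a b) t)
    (hle : ∀ t ∈ Icc a b, V' t ≤ -C * V t + exp (-C * (t - a)) * g t) :
    AntitoneOn (fun t => exp (C * (t - a)) * V t - G t) (Icc a b) := by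
  have hW : ∀ t ∈ Icc a b, HasDerivWithinAt (fun t => exp (C * (t - a)) * V t - G t)
      (exp (C * (t - a)) * C * V t + exp (C * (t - a)) * V' t - g t) (Icc a b) t := by
    intro t ht
    exact (((hasDerivAt_exp_mul_sub C a t).hasDerivWithinAt.mul (hV t ht)).sub
      (hG t ht)).congr_deriv (by ring)
  refine antitoneOn_of_hasDerivWithinAt_nonpos (convex_Icc a b)
    (fun t ht => (hW t ht).continuousWithinAt)
    (fun t ht => (hW t (interior_subset ht)).mono interior_subset) fun t ht => ?_
  have := mul_le_mul_of_nonneg_left (hle t (interior_subset ht)) (exp_pos (C * (t - a))).le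
  linear_combination this + g t * exp_neg_mul_mul_exp_mul C (t - a)

theorem le_exp_neg_mul_of_deriv_le
    (hV : ∀ t ∈ Icc a b, HasDerivWithinAt V (V' t) (Icc a b) t)
    (hG : ∀ t ∈ Icc a b, HasDerivWithinAt G (g t) (Icc a b) t)
    (hle : ∀ t ∈ Icc a b, V' t ≤ -C * V t + exp (-C * (t - a)) * g t)
    {t : ℝ} (ht : t ∈ Icc a b) :
    V t ≤ exp (-C * (t - a)) * (V a + G t - G a) := by
  have hmono := antitoneOn_exp_mul_sub_of_deriv_le hV hG hle
    (left_mem_Icc.2 (ht.1.trans ht.2)) ht ht.1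
  simp only [sub_self, mul_zero, exp_zero, one_mul] at hmono
  have := mul_le_mul_of_nonneg_left hmono (exp_pos (-C * (t - a))).le
  linear_combination this - V t * exp_neg_mul_mul_exp_mul C (t - a)

end IntegratingFactor

theorem mul_exp_neg_mul_le_mul_exp_neg_mul {M β C t t0 : ℝ} (hM : 0 ≤ M) (hCβ : C ≤ β)
    (ht : t0 ≤ t) : M * exp (-β * t) ≤ M * exp (-β * t0) * exp (-C * (t - t0)) := by
  rw [mul_assoc, ← exp_add]
  exact mul_le_mul_of_nonneg_left (exp_le_exp.2 (by nlinarith)) hM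

theorem lyapunov_bound_slow_decay_general (C β M0 N T t0 : ℝ) (hC : 0 < C) (hCβ : C < β)
    (hM0 : 0 ≤ M0) (V V' : ℝ → ℝ)
    (hderiv : ∀ t ∈ Set.Icc t0 (t0 + T), HasDerivWithinAt V (V' t) (Set.Icc t0 (t0 + T)) t)
    (hineq : ∀ t ∈ Set.Icc t0 (t0 + T), V' t ≤ -C * V t + M0 * Real.exp (-β * t) + N) :
    ∀ t ∈ Set.Icc t0 (t0 + T),
      V t ≤ (V t0 + M0 * Real.exp (-β * t0) * T - N / C) * Real.exp (-C * (t - t0))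
        + N / C := by
  intro t ht
  set m := M0 * exp (-β * t0)
  have hG : ∀ s ∈ Icc t0 (t0 + T), HasDerivWithinAt
      (fun s => m * (s - t0) + N / C * exp (C * (s - t0)))
      (m + N * exp (C * (s - t0))) (Icc t0 (t0 + T)) s := by
    intro s _
    refine ((((hasDerivAt_id s).sub_const t0).const_mul m).add
      ((hasDerivAt_exp_mul_sub C t0 s).const_mul (N / C))).hasDerivWithinAt.congr_deriv ?_
    field_simp
  have hle : ∀ s ∈ Icc t0 (t0 + T),
      V' s ≤ -C * V s + exp (-C * (s - t0)) * (m + N * exp (C * (s - t0))) := by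
    intro s hs
    linear_combination hineq s hs + mul_exp_neg_mul_le_mul_exp_neg_mul hM0 hCβ.le hs.1
      - N * exp_neg_mul_mul_exp_mul C (s - t0)
  have hbound := le_exp_neg_mul_of_deriv_le hderiv hG hle ht
  have hm : m * (t - t0) ≤ m * T := mul_le_mul_of_nonneg_left (by linarith [ht.2]) (by positivity)
  simp only [sub_self, mul_zero, exp_zero, mul_one, zero_add] at hbound
  have := mul_le_mul_of_nonneg_left hm (exp_pos (-C * (t - t0))).le
  linear_combination hbound + this + N / C * exp_neg_mul_mul_exp_mul C (t - t0)

/-- Equation (28) (Condition 3, `C < β`): when the Lyapunov decay rate `C` is smaller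
than the trigger design parameter `β` and the turn-on duration is bounded by `T`,
the Lyapunov function lies beneath an exponentially converging function whose initial
value is inflated by `M₀ e^{-β t₀} T`. -/
theorem lyapunov_bound_slow_decay (C β M0 N T t0 : ℝ) (hC : 0 < C) (hCβ : C < β)
    (hM0 : 0 ≤ M0) (hN : 0 ≤ N) (hT : 0 ≤ T) (V V' : ℝ → ℝ)
    (hderiv : ∀ t ∈ Set.Icc t0 (t0 + T), HasDerivWithinAt V (V' t) (Set.Icc t0 (t0 + T)) t)
    (hineq : ∀ t ∈ Set.Icc t0 (t0 + T), V' t ≤ -C * V t + M0 * Real.exp (-β * t) + N) :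
    ∀ t ∈ Set.Icc t0 (t0 + T),
      V t ≤ (V t0 + M0 * Real.exp (-β * t0) * T - N / C) * Real.exp (-C * (t - t0))
        + N / C :=
  lyapunov_bound_slow_decay_general C β M0 N T t0 hC hCβ hM0 V V' hderiv hineq
end

section
/- For every real number $x$ and every $\mu > 0$, one has $0 \le |x| - x \tanh\!\left(\frac{x}{\mu}\right) \le 0.2785\,\mu$. -/
/-!
For `x ≥ 0` one has `x - x tanh (x / μ) = μ · t / (eᵗ + 1)` with `t = 2x / μ`, and the case `x < 0`
reduces to it by symmetry. The function `t / (eᵗ + 1)` is maximal where `t = 1 + e⁻ᵗ`, with maximum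
`κ = t - 1` solving `κ = e^{-(κ+1)}`; the bound `t ≤ κ (eᵗ + 1)` follows from
`κ eᵗ ≥ e^{t-κ-1} ≥ t - κ` as soon as `κ e^{κ+1} ≥ 1`, which holds for `κ = 0.2785`.
-/

open Real

namespace Real

theorem mul_tanh_div_eq_abs_mul (x μ : ℝ) : x * tanh (x / μ) = |x| * tanh (|x| / μ) := by
  rcases abs_choice x with h | h <;> rw [h]
  rw [neg_div, tanh_neg, neg_mul_neg]

theorem one_sub_tanh (y : ℝ) : 1 - tanh y = 2 / (exp (2 * y) + 1) := by
  have hexp : exp (2 * y) = exp y ^ 2 := by rw [← exp_nat_mul]; norm_num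
  rw [tanh_eq, exp_neg, hexp]
  field_simp
  ring

theorem le_mul_exp_add_one_of_one_le_mul_exp {κ : ℝ} (hκ : 1 ≤ κ * exp (κ + 1)) (t : ℝ) :
    t ≤ κ * (exp t + 1) := by
  calc t = (t - κ - 1) + 1 + κ := by ring
    _ ≤ exp (t - κ - 1) + κ := by gcongr; exact add_one_le_exp _
    _ ≤ κ * exp (κ + 1) * exp (t - κ - 1) + κ := by
      gcongr; exact le_mul_of_one_le_left (exp_pos _).le hκ
    _ = κ * (exp t + 1) := by rw [mul_assoc, ← exp_add]; ring_nf

-- Tight: `exp 1.2785 ≈ 3.59125` against `1 / 0.2785 ≈ 3.59066`, so eight Taylor terms are needed.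
theorem one_le_0_2785_mul_exp : (1 : ℝ) ≤ 0.2785 * exp (0.2785 + 1) := by
  have h := sum_le_exp_of_nonneg (x := 0.2785 + 1) (by norm_num) 8
  norm_num [Finset.sum_range_succ, Nat.factorial] at h ⊢
  linarith

theorem div_exp_add_one_le (t : ℝ) : t / (exp t + 1) ≤ 0.2785 := by
  rw [div_le_iff₀ (by positivity)]
  exact le_mul_exp_add_one_of_one_le_mul_exp one_le_0_2785_mul_exp t

end Real

/-- The hyperbolic-tangent robust compensation inequality:
`0 ≤ |x| - x tanh(x/μ) ≤ 0.2785 μ` for every real `x` and `μ > 0`. -/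
theorem abs_sub_mul_tanh_bound (x μ : ℝ) (hμ : 0 < μ) :
    0 ≤ |x| - x * Real.tanh (x / μ) ∧ |x| - x * Real.tanh (x / μ) ≤ 0.2785 * μ := by
  have hrewrite : |x| - x * tanh (x / μ) = μ * (2 * |x| / μ / (exp (2 * |x| / μ) + 1)) := by
    rw [mul_tanh_div_eq_abs_mul, ← mul_one_sub, one_sub_tanh, ← mul_div_assoc]
    field_simp
  rw [hrewrite]
  refine ⟨by positivity, ?_⟩
  rw [mul_comm (0.2785 : ℝ)]
  exact mul_le_mul_of_nonneg_left (div_exp_add_one_le _) hμ.le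
end

section
/- Let $P_b \in (0, \sqrt{2}-1]$. Then for every $x \in [-1,1]$, one has $x\,\mathrm{psat}(x) \ge x^2$. -/
/-- The piecewise saturation function `psat` of the paper, with parameter `Pb ∈ (0,1)`,
segment coefficients `a_p = 1/(Pb² - 1)` and `K_m = -a_p (Pb - 1)²/Pb`. -/
noncomputable def psat (Pb x : ℝ) : ℝ :=
  if x < -Pb then -(1 / (Pb ^ 2 - 1)) * (x + 1) ^ 2 - 1
  else if x ≤ Pb then (-(1 / (Pb ^ 2 - 1)) * (Pb - 1) ^ 2 / Pb) * x
  else (1 / (Pb ^ 2 - 1)) * (x - 1) ^ 2 + 1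

/-- If `Pb ∈ (0, √2 - 1]` then `x · psat x ≥ x²` for every `x ∈ [-1,1]` (the elementwise
form of the step `q_evᵀ psat(q_ev) ≥ q_evᵀ q_ev` in equation (13) of the paper). -/
theorem mul_psat_ge_sq (Pb : ℝ) (hPb : Pb ∈ Set.Ioc (0 : ℝ) (Real.sqrt 2 - 1))
    (x : ℝ) (hx : x ∈ Set.Icc (-1 : ℝ) 1) : x ^ 2 ≤ x * psat Pb x := by
  obtain ⟨hP0, hP2⟩ := hPb
  obtain ⟨hx1, hx2⟩ := hx
  have hsq : Real.sqrt 2 ^ 2 = 2 := Real.sq_sqrt (by norm_num)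
  have hs2 : Real.sqrt 2 < 2 := by nlinarith [Real.sqrt_nonneg 2]
  have hP1 : Pb < 1 := by linarith
  have hsqle : (Pb + 1) ^ 2 ≤ 2 := by nlinarith [Real.sqrt_nonneg 2]
  have hd : Pb ^ 2 - 1 < 0 := by nlinarith
  have hdne : Pb ^ 2 - 1 ≠ 0 := ne_of_lt hd
  set c : ℝ := 1 / (Pb ^ 2 - 1) with hc
  have hcd : c * (Pb ^ 2 - 1) = 1 := one_div_mul_cancel hdne
  have hcneg : c < 0 := by
    rw [hc]
    exact div_neg_of_pos_of_neg one_pos hd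
  unfold psat
  split_ifs with h1 h2
  · -- x < -Pb
    have hx0 : x < 0 := by linarith
    have hkey : 0 ≤ 1 + c * (x + 1) := by
      have h3 : (1 - Pb ^ 2) * (1 + c * (x + 1)) = -Pb ^ 2 - x := by
        have : c * (1 - Pb ^ 2) = -1 := by linarith [hcd]
        nlinarith [this]
      nlinarith [h3]
    have h2 : 0 ≤ (x + 1) * (1 + c * (x + 1)) :=
      mul_nonneg (by linarith) hkey
    nlinarith [mul_nonpos_of_nonpos_of_nonneg (le_of_lt hx0) h2]
  · -- -Pb ≤ x ≤ Pb
    have hKm : 1 ≤ (-c * (Pb - 1) ^ 2 / Pb) := by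
      rw [le_div_iff₀ hP0]
      have h3 : (1 - Pb ^ 2) * (-c * (Pb - 1) ^ 2 - Pb) = (1 - Pb) ^ 2 - Pb * (1 - Pb ^ 2) := by
        have : c * (1 - Pb ^ 2) = -1 := by linarith [hcd]
        nlinarith [this]
      nlinarith [h3]
    have : x ^ 2 ≤ (-c * (Pb - 1) ^ 2 / Pb) * x ^ 2 := by
      nlinarith [sq_nonneg x]
    nlinarith [this]
  · -- Pb < x
    have hx0 : 0 < x := by linarith
    have hkey : 0 ≤ 1 + c * (1 - x) := by
      have h3 : (1 - Pb ^ 2) * (1 + c * (1 - x)) = x - Pb ^ 2 := by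
        have : c * (1 - Pb ^ 2) = -1 := by linarith [hcd]
        nlinarith [this]
      nlinarith [h3]
    have h4 : 0 ≤ (1 - x) * (1 + c * (1 - x)) :=
      mul_nonneg (by linarith) hkey
    nlinarith [mul_nonneg (le_of_lt hx0) h4]
end

section
/- Let $q_0 \in \mathbb{R}$ and $q \in \mathbb{R}^3$ satisfy $q_0^2 + \|q\|^2 = 1$ and $q_0 \neq 0$, and let $\Gamma = \tfrac{1}{2}(q_0 I_3 + q^{\times})$. Then $\Gamma$ is invertible and the operator norm of its inverse equals $2/|q_0|$, i.e. $\|\Gamma^{-1}\| = \frac{2}{|q_0|}$. -/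
/-!
Since `q^×` is skew-symmetric, `Γ x` is the orthogonal sum of `(q₀/2) x` and `½ q × x`, so
`‖Γ x‖ ≥ (|q₀|/2) ‖x‖`, with equality on the kernel of `q^×`. That kernel is nontrivial because a
`3 × 3` skew-symmetric matrix is singular. The lower bound makes `Γ` invertible with
`‖Γ⁻¹‖ ≤ 2/|q₀|`, and a kernel vector of `q^×` attains it.
-/

open Matrix

/-- The cross-product (skew-symmetric) matrix `q^×` of `q ∈ ℝ³`. -/
def crossMat (q : EuclideanSpace ℝ (Fin 3)) : Matrix (Fin 3) (Fin 3) ℝ :=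
  !![0, -q 2, q 1; q 2, 0, -q 0; -q 1, q 0, 0]

open scoped RealInnerProductSpace

theorem norm_le_norm_add_of_inner_eq_zero {F : Type*} [NormedAddCommGroup F]
    [InnerProductSpace ℝ F] {x y : F} (h : ⟪x, y⟫ = 0) : ‖x‖ ≤ ‖x + y‖ := by
  rw [mul_self_le_mul_self_iff (norm_nonneg _) (norm_nonneg _),
    norm_add_sq_eq_norm_sq_add_norm_sq_real h]
  exact le_add_of_nonneg_right (mul_self_nonneg _)

section InverseNorm

variable {𝕜 E F : Type*} [NontriviallyNormedField 𝕜] [NormedAddCommGroup E] [NormedSpace 𝕜 E]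
  [NormedAddCommGroup F] [NormedSpace 𝕜 F]

theorem ContinuousLinearMap.opNorm_eq_inv_of_leftInverse_of_rightInverse
    {f : E →L[𝕜] F} {g : F →L[𝕜] E} (hgf : Function.LeftInverse g f)
    (hfg : Function.RightInverse g f) {c : ℝ} (hc : 0 < c) (hf : ∀ x, c * ‖x‖ ≤ ‖f x‖)
    {v : E} (hv : v ≠ 0) (hfv : ‖f v‖ = c * ‖v‖) :
    ‖g‖ = c⁻¹ := by
  refine le_antisymm (g.opNorm_le_bound (inv_nonneg.2 hc.le) fun y => ?_) ?_
  · rw [le_inv_mul_iff₀ hc]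
    simpa only [hfg y] using hf (g y)
  · have hgv : ‖v‖ ≤ ‖g‖ * c * ‖v‖ := by
      simpa only [hgf v, hfv, mul_assoc] using g.le_opNorm (f v)
    rw [inv_le_iff_one_le_mul₀ hc]
    exact le_of_mul_le_mul_right (by rwa [one_mul]) (norm_pos_iff.2 hv)

end InverseNorm

namespace Matrix

variable {n 𝕜 : Type*} [Fintype n] [DecidableEq n] [RCLike 𝕜]

theorem isUnit_of_mul_norm_le_norm_toEuclideanCLM {M : Matrix n n 𝕜} {c : ℝ} (hc : 0 < c)
    (hM : ∀ x, c * ‖x‖ ≤ ‖toEuclideanCLM (𝕜 := 𝕜) M x‖) : IsUnit M := by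
  refine mulVec_injective_iff_isUnit.1 fun x y hxy => ?_
  have hbound := hM (WithLp.toLp 2 (x - y))
  rw [toEuclideanCLM_toLp, mulVec_sub, hxy, sub_self, WithLp.toLp_zero, norm_zero] at hbound
  have hxy0 : ‖(WithLp.toLp 2 (x - y) : EuclideanSpace 𝕜 n)‖ = 0 :=
    le_antisymm (nonpos_of_mul_nonpos_right hbound hc) (norm_nonneg _)
  simpa [sub_eq_zero] using hxy0

theorem isUnit_and_opNorm_toEuclideanCLM_inv_eq {M : Matrix n n 𝕜} {c : ℝ} (hc : 0 < c)
    (hM : ∀ x, c * ‖x‖ ≤ ‖toEuclideanCLM (𝕜 := 𝕜) M x‖) {v : EuclideanSpace 𝕜 n} (hv : v ≠ 0)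
    (hMv : ‖toEuclideanCLM (𝕜 := 𝕜) M v‖ = c * ‖v‖) :
    IsUnit M ∧ ‖toEuclideanCLM (𝕜 := 𝕜) M⁻¹‖ = c⁻¹ := by
  have hunit := isUnit_of_mul_norm_le_norm_toEuclideanCLM hc hM
  have hdet := (isUnit_iff_isUnit_det M).1 hunit
  refine ⟨hunit, ContinuousLinearMap.opNorm_eq_inv_of_leftInverse_of_rightInverse
    (fun x => ?_) (fun y => ?_) hc hM hv hMv⟩
  · rw [← mul_apply_eq_comp, ← map_mul, nonsing_inv_mul M hdet, map_one, one_apply_eq_self]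
  · rw [← mul_apply_eq_comp, ← map_mul, mul_nonsing_inv M hdet, map_one, one_apply_eq_self]

end Matrix

theorem det_crossMat (q : EuclideanSpace ℝ (Fin 3)) : (crossMat q).det = 0 := by
  simp only [crossMat, det_fin_three, of_apply, cons_val', cons_val_zero, cons_val_one, cons_val,
    cons_val_fin_one]
  ring

theorem crossMat_mulVec (q : EuclideanSpace ℝ (Fin 3)) (x : Fin 3 → ℝ) :
    crossMat q *ᵥ x = WithLp.ofLp q ⨯₃ x := by
  ext i
  fin_cases i <;> simp [crossMat, cross_apply, mulVec, dotProduct, Fin.sum_univ_three] <;> ring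

theorem inner_toEuclideanCLM_crossMat_self (q x : EuclideanSpace ℝ (Fin 3)) :
    ⟪x, toEuclideanCLM (𝕜 := ℝ) (crossMat q) x⟫ = 0 := by
  rw [inner_toEuclideanCLM, crossMat_mulVec, dot_cross_self]

theorem gamma_inv_opNorm_general (q0 : ℝ) (q : EuclideanSpace ℝ (Fin 3))
    (hq0 : q0 ≠ 0)
    (Γ : Matrix (Fin 3) (Fin 3) ℝ)
    (hΓ : Γ = (1 / 2 : ℝ) • (q0 • (1 : Matrix (Fin 3) (Fin 3) ℝ) + crossMat q)) :
    IsUnit Γ ∧ ‖Matrix.toEuclideanCLM (𝕜 := ℝ) Γ⁻¹‖ = 2 / |q0| := by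
  have hΓx (x : EuclideanSpace ℝ (Fin 3)) : toEuclideanCLM (𝕜 := ℝ) Γ x =
      (q0 / 2) • x + (1 / 2 : ℝ) • toEuclideanCLM (𝕜 := ℝ) (crossMat q) x := by
    simp only [hΓ, map_smul, map_add, map_one, _root_.smul_apply, _root_.add_apply,
      one_apply_eq_self, smul_add, smul_smul, one_div_mul_eq_div]
  have hlower (x : EuclideanSpace ℝ (Fin 3)) :
      |q0| / 2 * ‖x‖ ≤ ‖toEuclideanCLM (𝕜 := ℝ) Γ x‖ := by
    have horth : ⟪(q0 / 2) • x, (1 / 2 : ℝ) • toEuclideanCLM (𝕜 := ℝ) (crossMat q) x⟫ = 0 := by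
      rw [real_inner_smul_left, real_inner_smul_right, inner_toEuclideanCLM_crossMat_self,
        mul_zero, mul_zero]
    calc |q0| / 2 * ‖x‖ = ‖(q0 / 2) • x‖ := by rw [norm_smul, Real.norm_eq_abs, abs_div, abs_two]
      _ ≤ ‖toEuclideanCLM (𝕜 := ℝ) Γ x‖ := hΓx x ▸ norm_le_norm_add_of_inner_eq_zero horth
  obtain ⟨v, hv, hqv⟩ := exists_mulVec_eq_zero_iff.2 (det_crossMat q)
  have hΓv : toEuclideanCLM (𝕜 := ℝ) Γ (WithLp.toLp 2 v) = (q0 / 2) • WithLp.toLp 2 v := by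
    rw [hΓx, toEuclideanCLM_toLp, hqv, WithLp.toLp_zero, smul_zero, add_zero]
  rw [← inv_div]
  refine isUnit_and_opNorm_toEuclideanCLM_inv_eq (by positivity) hlower
    (v := WithLp.toLp 2 v) (by simpa using hv) ?_
  rw [hΓv, norm_smul, Real.norm_eq_abs, abs_div, abs_two]

/-- If `q₀² + ‖q‖² = 1`, `q₀ ≠ 0` and `Γ = ½(q₀ I₃ + q^×)`, then `Γ` is invertible and
the operator norm (induced by the Euclidean norm) of its inverse is `2/|q₀|`
(Remark 1 of the paper). -/
theorem gamma_inv_opNorm (q0 : ℝ) (q : EuclideanSpace ℝ (Fin 3))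
    (hunit : q0 ^ 2 + ‖q‖ ^ 2 = 1) (hq0 : q0 ≠ 0)
    (Γ : Matrix (Fin 3) (Fin 3) ℝ)
    (hΓ : Γ = (1 / 2 : ℝ) • (q0 • (1 : Matrix (Fin 3) (Fin 3) ℝ) + crossMat q)) :
    IsUnit Γ ∧ ‖Matrix.toEuclideanCLM (𝕜 := ℝ) Γ⁻¹‖ = 2 / |q0| :=
  gamma_inv_opNorm_general q0 q hq0 Γ hΓ
end
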